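/- arXiv:1205.4891 — 2 statements merged into one kernel-verified Lean document; each statement's English description precedes it below -/
import Mathlib

section
/- Let {C_1,…,C_k} be an (α,γ)-clustering of X, let i ≠ j, and let x ∈ C_i and y ∈ C_j. Then ((γ−1)/γ)·Δ(y,C_i) ≤ d(x,y) ≤ ((γ²+1)/(γ·(γ−1)))·Δ(y,C_i). -/
open Finset

/-- `P(A)`: the probability mass of a finite set `A`. -/
noncomputable def pOf {X : Type*} (P : X → ℝ) (A : Finset X) : ℝ := ∑ x ∈ A, P x

/-- `Δ(x,A)`: the average distance from `x` to `A`,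
weighted by the probability mass function `P` restricted to `A`. -/
noncomputable def Dpt {X : Type*} [MetricSpace X] (P : X → ℝ) (x : X) (A : Finset X) : ℝ :=
  (∑ y ∈ A, P y * dist x y) / pOf P A

/-- `{C_1,…,C_k}` is an `(α,γ)`-clustering: a partition of `X` into nonempty parts, each of
probability at least `α`, such that `Δ(x,C_j) ≥ γ·Δ(x,C_i)` for all `i ≠ j` and `x ∈ C_i`. -/
def IsGoodClustering {X : Type*} [Fintype X] [MetricSpace X] (P : X → ℝ) (α γ : ℝ)
    {k : ℕ} (C : Fin k → Finset X) : Prop :=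
  (∀ i, (C i).Nonempty) ∧
  (∀ i j, i ≠ j → Disjoint (C i) (C j)) ∧
  (∀ x : X, ∃ i, x ∈ C i) ∧
  (∀ i, α ≤ pOf P (C i)) ∧
  (∀ i j, i ≠ j → ∀ x ∈ C i, γ * Dpt P x (C i) ≤ Dpt P x (C j))

/-! The separation condition, applied at `x` and at `y`, combines with the triangle inequality
for average distances, `|Δ(x,A) - Δ(y,A)| ≤ d(x,y) ≤ Δ(x,A) + Δ(y,A)`. Eliminating
`Δ(x,C_i)`, `Δ(x,C_j)` and `Δ(y,C_j)` from the resulting linear inequalities bounds `d(x,y)`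
in terms of `Δ(y,C_i)` alone. -/

section AverageDistance

variable {X : Type*} {P : X → ℝ} {A : Finset X}

lemma pOf_pos (hP : ∀ z ∈ A, 0 < P z) (hA : A.Nonempty) : 0 < pOf P A :=
  sum_pos hP hA

variable [MetricSpace X]

lemma Dpt_le_dist_add_Dpt (hP : ∀ z ∈ A, 0 ≤ P z) (hA : 0 < pOf P A) (x y : X) :
    Dpt P x A ≤ dist x y + Dpt P y A := by
  have hsum : ∑ z ∈ A, P z * dist x z ≤ pOf P A * dist x y + ∑ z ∈ A, P z * dist y z := by
    rw [pOf, sum_mul, ← sum_add_distrib]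
    refine sum_le_sum fun z hz => ?_
    rw [← mul_add]
    exact mul_le_mul_of_nonneg_left (dist_triangle x y z) (hP z hz)
  rw [Dpt, Dpt, div_le_iff₀ hA, add_mul, div_mul_cancel₀ _ hA.ne']
  linarith

lemma dist_le_Dpt_add_Dpt (hP : ∀ z ∈ A, 0 ≤ P z) (hA : 0 < pOf P A) (x y : X) :
    dist x y ≤ Dpt P x A + Dpt P y A := by
  have hsum : pOf P A * dist x y ≤ ∑ z ∈ A, P z * dist x z + ∑ z ∈ A, P z * dist y z := by
    rw [pOf, sum_mul, ← sum_add_distrib]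
    refine sum_le_sum fun z hz => ?_
    rw [← mul_add]
    exact mul_le_mul_of_nonneg_left (dist_triangle_right x y z) (hP z hz)
  rw [Dpt, Dpt, ← add_div, le_div_iff₀ hA]
  linarith

end AverageDistance

theorem stmt_1_general {X : Type*} [Fintype X] [MetricSpace X]
    (P : X → ℝ) (hP : ∀ x, 0 < P x)
    (α γ : ℝ) (hγ : 1 < γ)
    {k : ℕ} (C : Fin k → Finset X) (hC : IsGoodClustering P α γ C)
    (i j : Fin k) (hij : i ≠ j) (x y : X) (hx : x ∈ C i) (hy : y ∈ C j) :
    ((γ - 1) / γ) * Dpt P y (C i) ≤ dist x y ∧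
      dist x y ≤ ((γ ^ 2 + 1) / (γ * (γ - 1))) * Dpt P y (C i) := by
  obtain ⟨hne, -, -, -, hsep⟩ := hC
  have hP₀ : ∀ (l : Fin k), ∀ z ∈ C l, 0 ≤ P z := fun _ z _ => (hP z).le
  have hmass : ∀ l, 0 < pOf P (C l) := fun l => pOf_pos (fun z _ => hP z) (hne l)
  have hxi : γ * Dpt P x (C i) ≤ Dpt P x (C j) := hsep i j hij x hx
  have hyj : γ * Dpt P y (C j) ≤ Dpt P y (C i) := hsep j i hij.symm y hy
  have hyx := Dpt_le_dist_add_Dpt (hP₀ i) (hmass i) y x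
  have hxy := Dpt_le_dist_add_Dpt (hP₀ j) (hmass j) x y
  have hd := dist_le_Dpt_add_Dpt (hP₀ i) (hmass i) x y
  rw [dist_comm y x] at hyx
  have hγ₀ : 0 < γ := by linarith
  constructor
  · have key : (γ + 1) * ((γ - 1) * Dpt P y (C i)) ≤ (γ + 1) * (dist x y * γ) := by
      linear_combination (γ * γ) * hyx + γ * hxi + γ * hxy + hyj
    rw [div_mul_eq_mul_div, div_le_iff₀ hγ₀]
    exact le_of_mul_le_mul_left key (by linarith)
  · rw [div_mul_eq_mul_div, le_div_iff₀ (mul_pos hγ₀ (sub_pos.2 hγ))]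
    linear_combination (γ * γ) * hd + γ * hxi + γ * hxy + hyj

/-- In an `(α,γ)`-clustering, for `x ∈ C_i`, `y ∈ C_j` with `i ≠ j`,
`((γ−1)/γ)·Δ(y,C_i) ≤ d(x,y) ≤ ((γ²+1)/(γ(γ−1)))·Δ(y,C_i)`. -/
theorem stmt_1 {X : Type*} [Fintype X] [MetricSpace X]
    (P : X → ℝ) (hP : ∀ x, 0 < P x) (hsum : ∑ x, P x = 1)
    (α γ : ℝ) (hα : 0 < α) (hγ : 1 < γ)
    {k : ℕ} (C : Fin k → Finset X) (hC : IsGoodClustering P α γ C)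
    (i j : Fin k) (hij : i ≠ j) (x y : X) (hx : x ∈ C i) (hy : y ∈ C j) :
    ((γ - 1) / γ) * Dpt P y (C i) ≤ dist x y ∧
      dist x y ≤ ((γ ^ 2 + 1) / (γ * (γ - 1))) * Dpt P y (C i) :=
  stmt_1_general P hP α γ hγ C hC i j hij x y hx hy
end

section
/- For every α > 0 and γ > 1 there is a constant c > 0 (depending only on α and γ) with the following property. Let X be a finite metric space with probability mass function P positive everywhere, let C = {C_1,…,C_k} be an (α,γ)-clustering of X, let 0 < ε < α, and let A = {A_1,…,A_k} be a family of nonempty sets with A_i ⊆ C_i for every i. If d(C^γ(A), C) < ε, then C^γ(A) is an (ε, α−ε, γ−c·ε)-clustering of X. -/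
open Finset
open scoped Classical symmDiff

/-- `Δ_U(x,A)`: the (unweighted) average distance from `x` to the points of the finite set `A`. -/
noncomputable def DptU {X : Type*} [MetricSpace X] (x : X) (A : Finset X) : ℝ :=
  (∑ z ∈ A, dist x z) / (A.card : ℝ)

/-- The "Voronoi diagram" `C^γ(A)` of a collection `A = {A_1,…,A_k}` of finite subsets:
`C_i^γ(A) = {x : ∀ j ≠ i, γ·Δ_U(x,A_i) < Δ_U(x,A_j)}`. -/
noncomputable def voronoi {X : Type*} [Fintype X] [MetricSpace X] (γ : ℝ) {k : ℕ}
    (A : Fin k → Finset X) (i : Fin k) : Finset X :=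
  Finset.univ.filter (fun x => ∀ j, j ≠ i → γ * DptU x (A i) < DptU x (A j))

/-- The symmetric-difference distance between two (equal-length) collections of subsets of `X`:
the minimum over permutations `σ` of `P(∪ᵢ (Cᵢ ⊕ C'_{σ(i)}))`. -/
noncomputable def dColl {X : Type*} [DecidableEq X] (P : X → ℝ) {k : ℕ}
    (C C' : Fin k → Finset X) : ℝ :=
  Finset.univ.inf' ⟨Equiv.refl _, Finset.mem_univ _⟩ (fun σ : Equiv.Perm (Fin k) =>
    pOf P (Finset.univ.biUnion fun i => (C i) ∆ (C' (σ i))))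

/-- `{D_1,…,D_k}` is an `(ε,α',γ')`-clustering: each `D_i` has probability at least `α'`, and
there is an exceptional set `N` with `P(N) ≤ ε` such that every `x ∉ N` belongs to exactly one
`D_i` and satisfies `Δ(x,D_j) ≥ γ'·Δ(x,D_i)` for every `j ≠ i`. -/
def IsApproxClustering {X : Type*} [Fintype X] [MetricSpace X] (P : X → ℝ) (ε α' γ' : ℝ)
    {k : ℕ} (D : Fin k → Finset X) : Prop :=
  (∀ i, α' ≤ pOf P (D i)) ∧
  ∃ N : Finset X, pOf P N ≤ ε ∧
    ∀ x : X, x ∉ N →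
      (∃! i, x ∈ D i) ∧
      ∀ i, x ∈ D i → ∀ j, j ≠ i → γ' * Dpt P x (D i) ≤ Dpt P x (D j)

/-!
Fix a permutation `σ` witnessing `d(C^γ(A), C) < ε` and let `N` be the union of the symmetric
differences `D_i ∆ C_{σ i}`, where `D = C^γ(A)`; outside `N` each `D_i` agrees with `C_{σ i}`, so
masses drop by at most `ε`. For `x ∈ D_i ∖ N` and `j ≠ i`, the averages `Δ(x, D_i)` and
`Δ(x, D_j)` differ from `Δ(x, C_{σ i})` and `Δ(x, C_{σ j})` only through a set of mass at most
`ε`, on which the distance to `x` is `O(Δ(x, C_{σ j}))`: for points of `C_{σ j}` this is the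
`γ`-separation of `C`, for points of `D_i` it is the `γ`-separation of the Voronoi cells, applied
to `x`, the point itself and a point of `C_{σ j} ∩ D_j`. The ratio `γ` therefore survives up to a
loss `c ε` with `c` depending only on `α` and `γ`.
-/

section Mass

variable {X : Type*} {P : X → ℝ}

lemma pOf_nonneg (hP : ∀ x, 0 ≤ P x) (A : Finset X) : 0 ≤ pOf P A :=
  sum_nonneg fun x _ => hP x

lemma pOf_mono (hP : ∀ x, 0 ≤ P x) {A B : Finset X} (h : A ⊆ B) : pOf P A ≤ pOf P B :=
  sum_le_sum_of_subset_of_nonneg h fun x _ _ => hP x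

lemma sdiff_subset_symmDiff_comm [DecidableEq X] (C D : Finset X) : C \ D ⊆ D ∆ C :=
  fun _ hy => mem_symmDiff.2 (Or.inr (mem_sdiff.1 hy))

lemma pOf_le_pOf_inter_add_pOf_symmDiff [DecidableEq X] (hP : ∀ x, 0 ≤ P x) (C D : Finset X) :
    pOf P C ≤ pOf P (C ∩ D) + pOf P (D ∆ C) := by
  rw [pOf, ← sum_inter_add_sum_sdiff C D]
  exact add_le_add_right (pOf_mono hP (sdiff_subset_symmDiff_comm C D)) _

lemma pOf_sub_le_pOf [DecidableEq X] (hP : ∀ x, 0 ≤ P x) {C D : Finset X} {ε : ℝ}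
    (hε : pOf P (D ∆ C) ≤ ε) : pOf P C - ε ≤ pOf P D := by
  have h₁ := pOf_le_pOf_inter_add_pOf_symmDiff hP C D
  have h₂ := pOf_mono hP (inter_subset_right : C ∩ D ⊆ D)
  linarith

lemma inter_nonempty_of_pOf_symmDiff_lt [DecidableEq X] (hP : ∀ x, 0 ≤ P x) {C D : Finset X}
    (h : pOf P (D ∆ C) < pOf P C) : (C ∩ D).Nonempty := by
  by_contra hCD
  have := pOf_le_pOf_inter_add_pOf_symmDiff hP C D
  rw [not_nonempty_iff_eq_empty.1 hCD, show pOf P ∅ = 0 from sum_empty] at this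
  linarith

lemma pOf_one_pos {A : Finset X} (hA : A.Nonempty) : 0 < pOf (fun _ => (1 : ℝ)) A := by
  simpa [pOf] using hA

end Mass

section WeightedAverage

variable {X : Type*} [MetricSpace X] {W : X → ℝ}

lemma sum_mul_dist_le (hW : ∀ y, 0 ≤ W y) {A : Finset X} {x : X} {M : ℝ}
    (h : ∀ y ∈ A, dist x y ≤ M) : ∑ y ∈ A, W y * dist x y ≤ pOf W A * M := by
  rw [pOf, sum_mul]
  exact sum_le_sum fun y hy => mul_le_mul_of_nonneg_left (h y hy) (hW y)

lemma pOf_mul_dpt {A : Finset X} (hA : 0 < pOf W A) (x : X) :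
    pOf W A * Dpt W x A = ∑ y ∈ A, W y * dist x y :=
  mul_div_cancel₀ _ hA.ne'

lemma dpt_nonneg (hW : ∀ y, 0 ≤ W y) (x : X) (A : Finset X) : 0 ≤ Dpt W x A :=
  div_nonneg (sum_nonneg fun y _ => mul_nonneg (hW y) dist_nonneg) (pOf_nonneg hW A)

lemma dpt_le_dist_add_dpt (hW : ∀ y, 0 ≤ W y) {A : Finset X} (hA : 0 < pOf W A) (x z : X) :
    Dpt W z A ≤ dist x z + Dpt W x A := by
  refine le_of_mul_le_mul_left ?_ hA
  calc pOf W A * Dpt W z A = ∑ y ∈ A, W y * dist z y := pOf_mul_dpt hA z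
    _ ≤ ∑ y ∈ A, (W y * dist x z + W y * dist x y) := sum_le_sum fun y _ => by
        rw [← mul_add, dist_comm x z]
        exact mul_le_mul_of_nonneg_left (dist_triangle z x y) (hW y)
    _ = pOf W A * (dist x z + Dpt W x A) := by
        rw [sum_add_distrib, mul_add, pOf_mul_dpt hA, pOf, sum_mul]

lemma dist_le_dpt_add_dpt (hW : ∀ y, 0 ≤ W y) {A : Finset X} (hA : 0 < pOf W A) (x z : X) :
    dist x z ≤ Dpt W x A + Dpt W z A := by
  refine le_of_mul_le_mul_left ?_ hA
  calc pOf W A * dist x z = ∑ y ∈ A, W y * dist x z := by rw [pOf, sum_mul]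
    _ ≤ ∑ y ∈ A, (W y * dist x y + W y * dist z y) := sum_le_sum fun y _ => by
        rw [← mul_add, dist_comm z y]
        exact mul_le_mul_of_nonneg_left (dist_triangle x y z) (hW y)
    _ = pOf W A * (Dpt W x A + Dpt W z A) := by
        rw [sum_add_distrib, mul_add, pOf_mul_dpt hA, pOf_mul_dpt hA]

lemma dptU_eq_dpt_one (x : X) (A : Finset X) : DptU x A = Dpt (fun _ => 1) x A := by
  simp [DptU, Dpt, pOf]

end WeightedAverage

section Separation

variable {X : Type*} [MetricSpace X] {W : X → ℝ} {A B : Finset X} {γ : ℝ} {x y z : X}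

lemma sub_one_mul_dist_le_of_sep (hW : ∀ y, 0 ≤ W y) (hA : 0 < pOf W A) (hB : 0 < pOf W B)
    (hγ : 1 ≤ γ) (hx : γ * Dpt W x A ≤ Dpt W x B) (hz : γ * Dpt W z B ≤ Dpt W z A) :
    (γ - 1) * dist x z ≤ (γ + 1) * Dpt W x B := by
  have h₁ := dist_le_dpt_add_dpt hW hB x z
  have h₂ := dpt_le_dist_add_dpt hW hA x z
  have h₃ := dpt_nonneg hW x A
  nlinarith

lemma sub_one_mul_dist_le_of_same_side (hW : ∀ y, 0 ≤ W y) (hA : 0 < pOf W A)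
    (hB : 0 < pOf W B) (hγ : 0 ≤ γ) (hx : γ * Dpt W x A ≤ Dpt W x B)
    (hy : γ * Dpt W y A ≤ Dpt W y B) : (γ - 1) * dist x y ≤ 2 * Dpt W x B := by
  have h₁ := dist_le_dpt_add_dpt hW hA x y
  have h₂ := dpt_le_dist_add_dpt hW hB x y
  nlinarith

lemma sub_one_mul_dpt_le_of_sep (hW : ∀ y, 0 ≤ W y) (hA : 0 < pOf W A) (hB : 0 < pOf W B)
    (hγ : 0 < γ) (hx : γ * Dpt W x A ≤ Dpt W x B) (hz : γ * Dpt W z B ≤ Dpt W z A) :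
    (γ - 1) * Dpt W x B ≤ γ * dist x z := by
  have h₁ := dpt_le_dist_add_dpt hW hB z x
  have h₂ := dpt_le_dist_add_dpt hW hA x z
  rw [dist_comm] at h₁
  have key : (γ + 1) * ((γ - 1) * Dpt W x B) ≤ (γ + 1) * (γ * dist x z) := by
    nlinarith [mul_le_mul_of_nonneg_left h₁ (sq_nonneg γ), mul_le_mul_of_nonneg_left hz hγ.le,
      mul_le_mul_of_nonneg_left h₂ hγ.le]
  exact le_of_mul_le_mul_left key (by linarith)

lemma sq_sub_one_mul_dist_le (hW : ∀ y, 0 ≤ W y) (hA : 0 < pOf W A) (hB : 0 < pOf W B)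
    (hγ : 1 ≤ γ) (hx : γ * Dpt W x A ≤ Dpt W x B) (hy : γ * Dpt W y A ≤ Dpt W y B)
    (hz : γ * Dpt W z B ≤ Dpt W z A) : (γ - 1) ^ 2 * dist x y ≤ 2 * γ * dist x z := by
  have h₁ := sub_one_mul_dist_le_of_same_side hW hA hB (by linarith) hx hy
  have h₂ := sub_one_mul_dpt_le_of_sep hW hA hB (by linarith) hx hz
  nlinarith

end Separation

section Perturbation

variable {X : Type*} [MetricSpace X] [DecidableEq X] {P : X → ℝ} {C D : Finset X} {ε M : ℝ}

lemma sub_mul_dpt_le_of_pOf_symmDiff_le (hP : ∀ y, 0 ≤ P y) (hε : pOf P (D ∆ C) ≤ ε)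
    (hεC : ε < pOf P C) (hM₀ : 0 ≤ M) (x : X) (hM : ∀ y ∈ D \ C, dist x y ≤ M) :
    (pOf P C - ε) * Dpt P x D ≤ pOf P C * Dpt P x C + ε * M := by
  have hCD := pOf_sub_le_pOf hP hε
  have hD : 0 < pOf P D := by linarith
  have hε₀ : 0 ≤ ε := (pOf_nonneg hP _).trans hε
  have hC : 0 < pOf P C := by linarith
  have hout : ∑ y ∈ D \ C, P y * dist x y ≤ ε * M :=
    (sum_mul_dist_le hP hM).trans <| mul_le_mul_of_nonneg_right
      ((pOf_mono hP (sdiff_subset_symmDiff_comm D C)).trans (by rwa [symmDiff_comm])) hM₀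
  have hin : ∑ y ∈ D ∩ C, P y * dist x y ≤ pOf P C * Dpt P x C := by
    rw [pOf_mul_dpt hC]
    exact sum_le_sum_of_subset_of_nonneg inter_subset_right
      fun y _ _ => mul_nonneg (hP y) dist_nonneg
  calc (pOf P C - ε) * Dpt P x D ≤ pOf P D * Dpt P x D :=
        mul_le_mul_of_nonneg_right hCD (dpt_nonneg hP x D)
    _ = ∑ y ∈ D ∩ C, P y * dist x y + ∑ y ∈ D \ C, P y * dist x y := by
        rw [pOf_mul_dpt hD, sum_inter_add_sum_sdiff]
    _ ≤ pOf P C * Dpt P x C + ε * M := add_le_add hin hout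

lemma mul_dpt_sub_le_of_pOf_symmDiff_le (hP : ∀ y, 0 ≤ P y) (hε : pOf P (D ∆ C) ≤ ε)
    (hεC : ε < pOf P C) (hM₀ : 0 ≤ M) (x : X) (hM : ∀ y ∈ C \ D, dist x y ≤ M) :
    pOf P C * Dpt P x C - ε * M ≤ (pOf P C + ε) * Dpt P x D := by
  have hD : 0 < pOf P D := by linarith [pOf_sub_le_pOf hP hε]
  have hDC : pOf P D - ε ≤ pOf P C := pOf_sub_le_pOf hP (by rwa [symmDiff_comm])
  have hC : 0 < pOf P C := by linarith
  have hout : ∑ y ∈ C \ D, P y * dist x y ≤ ε * M :=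
    (sum_mul_dist_le hP hM).trans <|
      mul_le_mul_of_nonneg_right ((pOf_mono hP (sdiff_subset_symmDiff_comm C D)).trans hε) hM₀
  have hin : ∑ y ∈ C ∩ D, P y * dist x y ≤ pOf P D * Dpt P x D := by
    rw [pOf_mul_dpt hD]
    exact sum_le_sum_of_subset_of_nonneg inter_subset_right
      fun y _ _ => mul_nonneg (hP y) dist_nonneg
  have hDD : pOf P D * Dpt P x D ≤ (pOf P C + ε) * Dpt P x D :=
    mul_le_mul_of_nonneg_right (by linarith) (dpt_nonneg hP x D)
  rw [pOf_mul_dpt hC, ← sum_inter_add_sum_sdiff C D]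
  linarith

end Perturbation

lemma perturbed_separation {α γ ε p q a b u v K₁ K₂ : ℝ} (hγ : 0 < γ) (hε : 0 < ε)
    (hεα : ε < α) (hp : α ≤ p) (hp₁ : p ≤ 1) (hq : α ≤ q) (hq₁ : q ≤ 1) (hK₁ : 0 ≤ K₁)
    (hK₂ : 0 ≤ K₂) (ha : 0 ≤ a) (hab : γ * a ≤ b) (hu : 0 ≤ u) (hv : 0 ≤ v)
    (hpu : (p - ε) * u ≤ p * a + ε * (K₂ * b)) (hqv : q * b - ε * (K₁ * b) ≤ (q + ε) * v) :
    (γ - γ * (2 + K₁ + 2 * γ * K₂) / α ^ 2 * ε) * u ≤ v := by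
  set c := γ * (2 + K₁ + 2 * γ * K₂) / α ^ 2 with hc
  rcases le_or_gt (γ - c * ε) 0 with hcε | hcε
  · exact (mul_nonpos_of_nonpos_of_nonneg hcε hu).trans hv
  have hα : 0 < α := hε.trans hεα
  have hb : 0 ≤ b := (mul_nonneg hγ.le ha).trans hab
  have hcα : c * α ^ 2 = γ * (2 + K₁ + 2 * γ * K₂) := by rw [hc]; field_simp
  have hpq : α ^ 2 ≤ p * q := by nlinarith
  have hγK₂ : 0 ≤ γ * ε * K₂ := by positivity
  have hc₀ : 0 ≤ c := by positivity
  clear_value c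
  have hgain : p * q ≤ (p + γ * ε * K₂) * (q + ε) := by
    nlinarith [mul_nonneg (hα.le.trans hp) hε.le, mul_nonneg hγK₂ (hα.le.trans hq)]
  have hloss : p + q + K₁ * p - ε * K₁ + γ * K₂ * q + γ * ε * K₂ ≤ 2 + K₁ + 2 * γ * K₂ := by
    have hε₁ : ε ≤ 1 := by linarith
    nlinarith [mul_le_mul_of_nonneg_left hp₁ hK₁, mul_le_mul_of_nonneg_left hq₁ hK₂,
      mul_le_mul_of_nonneg_left hε₁ hK₂, mul_nonneg hε.le hK₁]
  -- `c` is chosen so that `c ε α²` pays for the loss `γ ε (2 + K₁ + 2 γ K₂)`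
  have hstar : (γ - c * ε) * ((p + γ * ε * K₂) * (q + ε)) ≤ γ * ((q - ε * K₁) * (p - ε)) := by
    linear_combination (mul_le_mul_of_nonneg_left (hpq.trans hgain) (mul_nonneg hc₀ hε.le)) +
      mul_le_mul_of_nonneg_left hloss (mul_nonneg hγ.le hε.le) - ε * hcα
  have hγu : γ * ((p - ε) * u) ≤ (p + γ * ε * K₂) * b := by nlinarith
  have hpε : 0 < p - ε := by linarith
  have hqε : 0 < q + ε := by linarith
  refine le_of_mul_le_mul_left ?_ (by positivity : 0 < γ * (p - ε) * (q + ε))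
  calc γ * (p - ε) * (q + ε) * ((γ - c * ε) * u)
      = (γ - c * ε) * (q + ε) * (γ * ((p - ε) * u)) := by ring
    _ ≤ (γ - c * ε) * (q + ε) * ((p + γ * ε * K₂) * b) :=
        mul_le_mul_of_nonneg_left hγu (by positivity)
    _ = (γ - c * ε) * ((p + γ * ε * K₂) * (q + ε)) * b := by ring
    _ ≤ γ * ((q - ε * K₁) * (p - ε)) * b := mul_le_mul_of_nonneg_right hstar hb
    _ = γ * (p - ε) * (q * b - ε * (K₁ * b)) := by ring
    _ ≤ γ * (p - ε) * ((q + ε) * v) := mul_le_mul_of_nonneg_left hqv (by positivity)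
    _ = γ * (p - ε) * (q + ε) * v := by ring

section Clustering

variable {X : Type*} [Fintype X] [MetricSpace X] {P : X → ℝ} {α γ : ℝ} {k : ℕ}
  {C A : Fin k → Finset X}

lemma mem_voronoi {i : Fin k} {x : X} :
    x ∈ voronoi γ A i ↔ ∀ j, j ≠ i → γ * DptU x (A i) < DptU x (A j) := by
  simp [voronoi]

lemma sq_sub_one_mul_dist_le_of_mem_voronoi (hγ : 1 ≤ γ) (hA : ∀ i, (A i).Nonempty)
    {i j : Fin k} (hji : j ≠ i) {x y z : X} (hx : x ∈ voronoi γ A i) (hy : y ∈ voronoi γ A i)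
    (hz : z ∈ voronoi γ A j) : (γ - 1) ^ 2 * dist x y ≤ 2 * γ * dist x z := by
  simp only [mem_voronoi, dptU_eq_dpt_one] at hx hy hz
  exact sq_sub_one_mul_dist_le (fun _ => zero_le_one) (pOf_one_pos (hA i)) (pOf_one_pos (hA j))
    hγ (hx j hji).le (hy j hji).le (hz i hji.symm).le

lemma IsGoodClustering.sub_one_mul_dist_le (hP : ∀ x, 0 ≤ P x) (hα : 0 < α) (hγ : 1 ≤ γ)
    (hC : IsGoodClustering P α γ C) {s t : Fin k} (hst : s ≠ t) {x z : X} (hx : x ∈ C s)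
    (hz : z ∈ C t) : (γ - 1) * dist x z ≤ (γ + 1) * Dpt P x (C t) :=
  sub_one_mul_dist_le_of_sep hP (hα.trans_le (hC.2.2.2.1 s)) (hα.trans_le (hC.2.2.2.1 t)) hγ
    (hC.2.2.2.2 s t hst x hx) (hC.2.2.2.2 t s hst.symm z hz)

end Clustering

lemma existsUnique_mem_of_mem_iff {X : Type*} {k : ℕ} {C : Fin k → Finset X}
    (hdisj : ∀ i j, i ≠ j → Disjoint (C i) (C j))
    {D : Fin k → Finset X} (σ : Equiv.Perm (Fin k)) {x : X} (hcov : ∃ i, x ∈ C i)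
    (h : ∀ i, x ∈ D i ↔ x ∈ C (σ i)) : ∃! i, x ∈ D i := by
  obtain ⟨t, ht⟩ := hcov
  refine ⟨σ.symm t, (h _).2 (by rwa [Equiv.apply_symm_apply]), fun m hm => ?_⟩
  have hσm : σ m = t := by
    by_contra hne
    exact disjoint_left.1 (hdisj _ _ hne) ((h m).1 hm) ht
  rw [← hσm, Equiv.symm_apply_apply]

-- `(γ + 1) / (γ - 1)` and `2 γ (γ + 1) / (γ - 1) ^ 3` bound, in units of `Δ(x, C_{σ j})`, the
-- distance from `x` to points of `C_{σ j}` and of its own Voronoi cell (see `dpt_voronoi_le`)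
noncomputable def stabilityConst (α γ : ℝ) : ℝ :=
  γ * (2 + (γ + 1) / (γ - 1) + 2 * γ * (2 * γ * (γ + 1) / (γ - 1) ^ 3)) / α ^ 2

lemma stabilityConst_pos {α γ : ℝ} (hα : 0 < α) (hγ : 1 < γ) : 0 < stabilityConst α γ := by
  have : 0 < γ - 1 := by linarith
  unfold stabilityConst
  positivity

lemma dpt_voronoi_le {X : Type*} [Fintype X] [MetricSpace X] [DecidableEq X] {P : X → ℝ}
    {α γ ε : ℝ} {k : ℕ} {C A : Fin k → Finset X} (hP : ∀ x, 0 ≤ P x) (hP₁ : ∑ x, P x = 1)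
    (hC : IsGoodClustering P α γ C) (hγ : 1 < γ) (hA : ∀ i, (A i).Nonempty) (hε : 0 < ε)
    (hεα : ε < α) {i j s t : Fin k} (hji : j ≠ i) (hst : s ≠ t)
    (hi : pOf P (voronoi γ A i ∆ C s) ≤ ε) (hj : pOf P (voronoi γ A j ∆ C t) ≤ ε) {x : X}
    (hxi : x ∈ voronoi γ A i) (hxs : x ∈ C s) :
    (γ - stabilityConst α γ * ε) * Dpt P x (voronoi γ A i) ≤ Dpt P x (voronoi γ A j) := by
  have hα : 0 < α := hε.trans hεα
  have hγ₁ : 0 < γ - 1 := by linarith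
  have hpOf_le_one : ∀ T, pOf P T ≤ 1 := fun T => (pOf_mono hP (subset_univ T)).trans hP₁.le
  set b := Dpt P x (C t)
  have hb : 0 ≤ b := dpt_nonneg hP x _
  have hfar : ∀ z ∈ C t, dist x z ≤ (γ + 1) / (γ - 1) * b := fun z hz => by
    rw [div_mul_eq_mul_div, le_div_iff₀ hγ₁, mul_comm]
    exact hC.sub_one_mul_dist_le hP hα hγ.le hst hxs hz
  obtain ⟨z, hz⟩ :=
    inter_nonempty_of_pOf_symmDiff_lt hP (hj.trans_lt (hεα.trans_le (hC.2.2.2.1 t)))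
  obtain ⟨hzt, hzj⟩ := mem_inter.1 hz
  have hnear : ∀ y ∈ voronoi γ A i, dist x y ≤ 2 * γ * (γ + 1) / (γ - 1) ^ 3 * b := fun y hy => by
    have h₁ := sq_sub_one_mul_dist_le_of_mem_voronoi hγ.le hA hji hxi hy hzj
    have h₂ := hC.sub_one_mul_dist_le hP hα hγ.le hst hxs hzt
    rw [div_mul_eq_mul_div, le_div_iff₀ (by positivity)]
    nlinarith
  exact perturbed_separation (by linarith) hε hεα (hC.2.2.2.1 s) (hpOf_le_one _)
    (hC.2.2.2.1 t) (hpOf_le_one _) (by positivity) (by positivity) (dpt_nonneg hP x _)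
    (hC.2.2.2.2 s t hst x hxs) (dpt_nonneg hP x _) (dpt_nonneg hP x _)
    (sub_mul_dpt_le_of_pOf_symmDiff_le hP hi (hεα.trans_le (hC.2.2.2.1 s)) (by positivity) x
      fun y hy => hnear y (mem_sdiff.1 hy).1)
    (mul_dpt_sub_le_of_pOf_symmDiff_le hP hj (hεα.trans_le (hC.2.2.2.1 t)) (by positivity) x
      fun y hy => hfar y (mem_sdiff.1 hy).1)

/-- For all `α > 0`, `γ > 1` there is `c > 0` such that: for every finite metric probability
space, every `(α,γ)`-clustering `C`, every family `A` with `A_i ⊆ C_i` nonempty, and every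
`0 < ε < α`, if `d(C^γ(A), C) < ε` then `C^γ(A)` is an `(ε, α−ε, γ−c·ε)`-clustering. -/
theorem stmt_8 (α γ : ℝ) (hα : 0 < α) (hγ : 1 < γ) :
    ∃ c : ℝ, 0 < c ∧
      ∀ (X : Type) (_ : Fintype X) (_ : MetricSpace X) (_ : DecidableEq X)
        (P : X → ℝ), (∀ x, 0 < P x) → (∑ x, P x = 1) →
        ∀ (k : ℕ) (C A : Fin k → Finset X),
          IsGoodClustering P α γ C →
          (∀ i, (A i).Nonempty) → (∀ i, A i ⊆ C i) →
          ∀ ε : ℝ, 0 < ε → ε < α →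
            dColl P (voronoi γ A) C < ε →
            IsApproxClustering P ε (α - ε) (γ - c * ε) (voronoi γ A) := by
  refine ⟨stabilityConst α γ, stabilityConst_pos hα hγ, ?_⟩
  intro X _ _ _ P hP hP₁ k C A hC hA _ ε hε hεα hd
  have hP₀ : ∀ x, 0 ≤ P x := fun x => (hP x).le
  obtain ⟨σ, -, hσ⟩ := (inf'_lt_iff _).1 hd
  set N := univ.biUnion fun i => voronoi γ A i ∆ C (σ i)
  have hΔ : ∀ i, pOf P (voronoi γ A i ∆ C (σ i)) ≤ ε := fun i =>
    (pOf_mono hP₀ (subset_biUnion_of_mem _ (mem_univ i))).trans hσ.le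
  have hmem : ∀ x ∉ N, ∀ i, x ∈ voronoi γ A i ↔ x ∈ C (σ i) := fun x hx i => by
    have : x ∉ voronoi γ A i ∆ C (σ i) := fun h => hx (mem_biUnion.2 ⟨i, mem_univ i, h⟩)
    rw [mem_symmDiff] at this
    tauto
  refine ⟨fun i => ?_, N, hσ.le, fun x hx => ⟨?_, fun i hxi j hji => ?_⟩⟩
  · linarith [pOf_sub_le_pOf hP₀ (hΔ i), hC.2.2.2.1 (σ i)]
  · exact existsUnique_mem_of_mem_iff hC.2.1 σ (hC.2.2.1 x) (hmem x hx)
  · exact dpt_voronoi_le hP₀ hP₁ hC hγ hA hε hεα hji (σ.injective.ne hji.symm) (hΔ i) (hΔ j) hxi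
      ((hmem x hx i).1 hxi)
end
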